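/- Let G_k be the Gauss substitution of the (e,e,e) triangle map: G_k(1) = 2, G_k(2) = 1^k 3, G_k(3) = 1^{k+1} 3, and suppose k ≥ 1. Then in G_k(v) for any word v over {1,2,3} not containing the factor 12, every occurrence of the letter 3 is immediately preceded by the letter 1; consequently 33 is not a factor of G_k(v). -/
import Mathlib


/-- The Gauss substitution `G_k` of the (e,e,e) triangle map on `Fin 3`
(letter `i+1` encoded as `i`): `1 ↦ 2`, `2 ↦ 1^k 3`, `3 ↦ 1^{k+1} 3`. -/
def Geee (k : ℕ) : Fin 3 → List (Fin 3) := fun c =>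
  if c = 0 then [1]
  else if c = 1 then List.replicate k 0 ++ [2]
  else List.replicate (k + 1) 0 ++ [2]

def P (w : List (Fin 3)) : Prop :=
  ∀ i : ℕ, w[i]? = some 2 → i ≠ 0 ∧ w[i - 1]? = some 0

lemma rep_block (n : ℕ) (hn : 1 ≤ n) :
    P (List.replicate n (0 : Fin 3) ++ [2]) := by
  intro i hi
  have hlen : (List.replicate n (0 : Fin 3)).length = n := List.length_replicate ..
  rcases lt_trichotomy i n with h | h | h
  · rw [List.getElem?_append_left (by simpa using h), List.getElem?_replicate_of_lt h] at hi
    exact absurd hi (by decide)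
  · subst h
    refine ⟨by omega, ?_⟩
    rw [List.getElem?_append_left (by rw [hlen]; omega), List.getElem?_replicate_of_lt (by omega)]
  · rw [List.getElem?_append_right (hlen.le.trans h.le), hlen] at hi
    rw [List.getElem?_eq_none (by simp; omega)] at hi
    exact absurd hi (by simp)

lemma geee_one (k : ℕ) : Geee k 1 = List.replicate k 0 ++ [2] := rfl
lemma geee_two (k : ℕ) : Geee k 2 = List.replicate (k+1) 0 ++ [2] := rfl

lemma block_P (k : ℕ) (hk : 1 ≤ k) (c : Fin 3) : P (Geee k c) := by
  fin_cases c
  · intro i hi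
    rcases i with _ | n <;> simp [Geee] at hi
  · exact rep_block k hk
  · exact rep_block (k+1) (by omega)

lemma rep_head (n : ℕ) (hn : 1 ≤ n) :
    (List.replicate n (0 : Fin 3) ++ [2])[0]? = some 0 := by
  rw [List.getElem?_append_left (by simp; omega), List.getElem?_replicate_of_lt (by omega)]

lemma block_head (k : ℕ) (hk : 1 ≤ k) (c : Fin 3) : (Geee k c)[0]? ≠ some 2 := by
  fin_cases c
  · simp [Geee]
  · show (List.replicate k (0:Fin 3) ++ [2])[0]? ≠ some 2
    rw [rep_head k hk]; decide
  · show (List.replicate (k+1) (0:Fin 3) ++ [2])[0]? ≠ some 2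
    rw [rep_head (k+1) (by omega)]; decide

lemma P_append (A B : List (Fin 3)) (hA : P A) (hB : P B) (hB0 : B[0]? ≠ some 2) :
    P (A ++ B) := by
  intro i hi
  by_cases h : i < A.length
  · rw [List.getElem?_append_left h] at hi
    obtain ⟨h0, h1⟩ := hA i hi
    exact ⟨h0, by rw [List.getElem?_append_left (by omega)]; exact h1⟩
  · push_neg at h
    rw [List.getElem?_append_right h] at hi
    have hne : i - A.length ≠ 0 := by
      intro h0; rw [h0] at hi; exact hB0 hi
    obtain ⟨_, h1⟩ := hB (i - A.length) hi
    have hi1 : A.length ≤ i - 1 := by omega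
    refine ⟨by omega, ?_⟩
    rw [List.getElem?_append_right hi1]
    have : i - 1 - A.length = i - A.length - 1 := by omega
    rw [this]; exact h1

lemma flat_head (k : ℕ) (hk : 1 ≤ k) (v : List (Fin 3)) :
    (v.flatMap (Geee k))[0]? ≠ some 2 := by
  induction v with
  | nil => simp
  | cons c v ih =>
    rw [List.flatMap_cons]
    have hc : 0 < (Geee k c).length := by
      fin_cases c <;> simp [Geee]
    rw [List.getElem?_append_left hc]
    exact block_head k hk c

lemma flat_P (k : ℕ) (hk : 1 ≤ k) (v : List (Fin 3)) : P (v.flatMap (Geee k)) := by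
  induction v with
  | nil => intro i hi; simp at hi
  | cons c v ih =>
    rw [List.flatMap_cons]
    exact P_append _ _ (block_P k hk c) ih (flat_head k hk v)

/-- If `k ≥ 1` and `v` does not contain the factor `12`, then in `G_k(v)` every
occurrence of the letter `3` is immediately preceded by a `1`; consequently
`33` is not a factor of `G_k(v)`. -/
theorem e_e_e_three_preceded_by_one (k : ℕ) (hk : 1 ≤ k)
    (v : List (Fin 3)) (hv : ¬ ([0,1] <:+: v)) :
    (∀ i : ℕ, (v.flatMap (Geee k))[i]? = some 2 →
      i ≠ 0 ∧ (v.flatMap (Geee k))[i - 1]? = some 0) ∧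
    ¬ ([2,2] <:+: v.flatMap (Geee k)) := by

  refine ⟨flat_P k hk v, ?_⟩
  rintro ⟨s, t, hst⟩
  have h2 : (v.flatMap (Geee k))[s.length + 1]? = some 2 := by
    rw [← hst]
    rw [show s ++ [2,2] ++ t = s ++ ([2,2] ++ t) by simp,
      List.getElem?_append_right (by omega)]
    simp
  obtain ⟨_, h1⟩ := flat_P k hk v (s.length + 1) h2
  rw [← hst, Nat.add_sub_cancel,
    show s ++ [2,2] ++ t = s ++ ([2,2] ++ t) by simp,
    List.getElem?_append_right (le_refl _)] at h1
  simp at h1
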